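/- Let k be a field and n ≥ 1, q ≥ 1 integers with q ≤ n. Then H^p(ℙ^n_k, Ω^q_{ℙ^n}(q)) = 0 for all p ≥ 0, and H^p(ℙ^n_k, O_{ℙ^n}) = 0 for all p ≥ 1; equivalently, H^p(ℙ^n, Λ^q(Ω_{ℙ^n}(1))) = 0 whenever p + q > 0. -/

import Mathlib

/-!
STATEMENT 12: Let k be a field and n ≥ 1, q ≥ 1 integers with q ≤ n.  Then
`H^p(ℙ^n_k, Ω^q_{ℙ^n}(q)) = 0` for all p ≥ 0, and `H^p(ℙ^n_k, O_{ℙ^n}) = 0` for all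
p ≥ 1; equivalently (as `Λ^0(Ω(1)) = O`), `H^p(ℙ^n, Λ^q(Ω_{ℙ^n}(1))) = 0` whenever
p + q > 0.

Mathlib has no sheaf cohomology on projective space, so we use the faithful standard
model: `Ω^q(q) = Λ^q(Ω(1))` is, by the Euler sequence, the kernel of the Koszul
contraction of `Λ^q(O^{⊕(n+1)})` with the Euler section, and its cohomology is computed
by the Čech complex with respect to the standard affine cover.
-/

noncomputable section
namespace CechProj

open Finset

variable (n : ℕ) (R : Type) [CommRing R]

/-- The ring of Laurent polynomials in the `n+1` homogeneous coordinates `x_0, …, x_n`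
(the localization of `R[x_0,…,x_n]` at `x_0⋯x_n`), modeled as the monoid algebra on the
exponent group `Fin (n+1) → ℤ`. -/
abbrev Laurent : Type := AddMonoidAlgebra R (Fin (n + 1) → ℤ)

/-- `Γ(U_T, O(d))`: the degree-`d` part of the localization of `R[x_0,…,x_n]` at the
variables `x_i`, `i ∈ T`; this is the module of sections of the Serre twisting sheaf
`O(d)` on `ℙ^n_R` over the open set `U_T = {x_i ≠ 0 for all i ∈ T}`.  It is the span of
the monomials `x^e` with `∑ e_i = d` and `e_i ≥ 0` for `i ∉ T`. -/
def sec (T : Set (Fin (n + 1))) (d : ℤ) : Submodule R (Laurent n R) :=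
  Submodule.span R
    {x | ∃ e : Fin (n + 1) → ℤ, (∑ i, e i) = d ∧ (∀ i ∉ T, 0 ≤ e i) ∧
      x = AddMonoidAlgebra.single e (1 : R)}

lemma sec_mono {T T' : Set (Fin (n + 1))} (h : T' ⊆ T) (d : ℤ) :
    sec n R T' d ≤ sec n R T d := by
  apply Submodule.span_mono
  rintro x ⟨e, h1, h2, h3⟩
  exact ⟨e, h1, fun i hi => h2 i (fun hc => hi (h hc)), h3⟩

lemma range_face_subset {p : ℕ} (t : Fin (p + 2) ↪o Fin (n + 1)) (j : Fin (p + 2)) :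
    Set.range ((Fin.succAboveOrderEmb j).trans t) ⊆ Set.range t := by
  rintro x ⟨a, rfl⟩; exact ⟨_, rfl⟩

/-- The homogeneous coordinate `x_i`, as a Laurent polynomial. -/
def X (i : Fin (n + 1)) : Laurent n R := AddMonoidAlgebra.single (Pi.single i (1 : ℤ)) 1

/-- `Γ(U_T, Ω^q_{ℙ^n}(q)) = Γ(U_T, Λ^q(Ω_{ℙ^n}(1)))`.  Via the Euler sequence
`0 → Ω(1) → O^{n+1} → O(1) → 0`, the sheaf `Λ^q(Ω(1))` is the kernel of the Koszul
contraction `Λ^q(O^{⊕(n+1)}) → Λ^{q−1}(O^{⊕(n+1)})(1)` with the Euler section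
`(x_0, …, x_n)`.  We realize `Λ^q(O^{⊕(n+1)})` over `U_T` as the module of alternating
functions on `q`-tuples of indices with values in `Γ(U_T, O)`, and take the kernel of
the contraction. -/
def omegaSec (q : ℕ) (T : Set (Fin (n + 1))) :
    Submodule R ((Fin q → Fin (n + 1)) → Laurent n R) where
  carrier := {ω |
    (∀ s, ω s ∈ sec n R T 0) ∧
    (∀ (s : Fin q → Fin (n + 1)) (σ : Equiv.Perm (Fin q)),
      ω (s ∘ σ) = (Equiv.Perm.sign σ : ℤ) • ω s) ∧
    (∀ s, ¬ Function.Injective s → ω s = 0) ∧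
    (∀ (m : ℕ) (h : q = m + 1) (s' : Fin m → Fin (n + 1)),
      (∑ i : Fin (n + 1), X n R i * ω (fun j => (Fin.cons i s' : Fin (m+1) → Fin (n+1)) (Fin.cast h j))) = 0)}
  zero_mem' := by
    refine ⟨fun s => Submodule.zero_mem _, fun s σ => by simp, fun s _ => rfl, ?_⟩
    intro m h s'
    simp
  add_mem' := by
    rintro ω ω' ⟨ha, hb, hc, hd⟩ ⟨ha', hb', hc', hd'⟩
    refine ⟨fun s => Submodule.add_mem _ (ha s) (ha' s), ?_, ?_, ?_⟩
    · intro s σ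
      simp only [Pi.add_apply, hb s σ, hb' s σ, smul_add]
    · intro s hs
      simp only [Pi.add_apply, hc s hs, hc' s hs, add_zero]
    · intro m h s'
      simp only [Pi.add_apply, mul_add, Finset.sum_add_distrib, hd m h s', hd' m h s',
        add_zero]
  smul_mem' := by
    rintro c ω ⟨ha, hb, hc, hd⟩
    refine ⟨fun s => Submodule.smul_mem _ _ (ha s), ?_, ?_, ?_⟩
    · intro s σ
      simp only [Pi.smul_apply, hb s σ, smul_comm c]
    · intro s hs
      simp only [Pi.smul_apply, hc s hs, smul_zero]
    · intro m h s'
      simp only [Pi.smul_apply, mul_smul_comm, ← Finset.smul_sum, hd m h s', smul_zero]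

lemma omegaSec_mono (q : ℕ) {T T' : Set (Fin (n + 1))} (h : T' ⊆ T) :
    omegaSec n R q T' ≤ omegaSec n R q T := by
  rintro ω ⟨ha, hb, hc, hd⟩
  exact ⟨fun s => sec_mono n R h 0 (ha s), hb, hc, hd⟩

/-- Čech `p`-cochains of `Ω^q(q) = Λ^q(Ω_{ℙ^n}(1))` with respect to the standard affine
cover of `ℙ^n_R`. -/
abbrev CochainOmega (q : ℕ) (p : ℕ) : Type :=
  (t : Fin (p + 1) ↪o Fin (n + 1)) → omegaSec n R q (Set.range t)

/-- The Čech differential for `Ω^q(q)`. -/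
def cechDOmega (q : ℕ) (p : ℕ) : CochainOmega n R q p →ₗ[R] CochainOmega n R q (p + 1) where
  toFun ω t := ∑ j : Fin (p + 2), ((-1 : ℤ) ^ (j : ℕ)) •
    (Submodule.inclusion (omegaSec_mono n R q (range_face_subset n t j)))
      (ω ((Fin.succAboveOrderEmb j).trans t))
  map_add' ω ω' := by
    funext t
    simp only [Pi.add_apply]
    rw [← Finset.sum_add_distrib]
    exact Finset.sum_congr rfl fun j _ => by rw [← smul_add]; rfl
  map_smul' r ω := by
    funext t
    simp only [map_smul, RingHom.id_apply, Pi.smul_apply, Finset.smul_sum]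
    congr 1
    funext j
    rw [smul_comm]

/-- The coboundaries (zero in degree 0). -/
def coboundaryOmega (q : ℕ) : (i : ℕ) → Submodule R (CochainOmega n R q i)
  | 0 => ⊥
  | (m + 1) => LinearMap.range (cechDOmega n R q m)

/-- The Čech cohomology `H^p(ℙ^n_R, Ω^q(q)) = H^p(ℙ^n_R, Λ^q(Ω(1)))` with respect to
the standard affine cover: cocycles modulo coboundaries.  For `q = 0` this is
`H^p(ℙ^n_R, O)`. -/
abbrev cohomologyOmega (q : ℕ) (p : ℕ) : Type :=
  ↥((LinearMap.ker (cechDOmega n R q p)).map (coboundaryOmega n R q p).mkQ)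

end CechProj
end

/-!
Give `x^e e_{s_1} ∧ ⋯ ∧ e_{s_q}` the multidegree `e + δ_{s_1} + ⋯ + δ_{s_q}`. The Čech
complex splits into multidegree components, and only multidegrees `w` with `∑ w = q` occur.
For such `w` pick `v` with `w_v` maximal, so `w_v ≥ 1` if `q ≥ 1` and `w_v ≥ 0` if `q = 0`.
Since `e_v` occurs at most once in a wedge product, the exponent of `x_v` in a section of
multidegree `w` is nonnegative, so such a section over `U_T` extends to `U_{T ∖ {v}}`. Hence
the cone construction towards the chart `U_v`, a contracting homotopy of the Čech complex of
the cover by all affine charts, is defined on the multidegree-`w` part, and kills its cohomology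
in positive degrees.

In degree `0` a cocycle is a global section of `Λ^q(O^{n+1})` annihilated by contraction with
the Euler vector `(x_0, …, x_n)`. Its coefficients are regular on every chart, hence constant,
and the Euler relation `∑ᵢ xᵢ ω(eᵢ ∧ η) = 0` forces the constants to vanish when
`q ≥ 1`.
-/

noncomputable section
namespace CechProj

open Finset AddMonoidAlgebra

section FinsetCech

variable {α : Type*} [LinearOrder α] {M : Type*} [AddCommGroup M]

def numLT (A : Finset α) (a : α) : ℕ := #{b ∈ A | b < a}

lemma numLT_insert {v : α} {A : Finset α} (hv : v ∉ A) (a : α) :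
    numLT (insert v A) a = numLT A a + if v < a then 1 else 0 := by
  unfold numLT
  rw [filter_insert]
  split_ifs with h
  · rw [card_insert_of_notMem fun h' => hv (mem_filter.1 h').1]
  · rfl

lemma numLT_erase {a : α} {A : Finset α} (ha : a ∈ A) (v : α) :
    numLT A v = numLT (A.erase a) v + if a < v then 1 else 0 := by
  conv_lhs => rw [← insert_erase ha]
  exact numLT_insert (notMem_erase a A) v

def finsetCechD (c : Finset α → M) (A : Finset α) : M :=
  ∑ a ∈ A, (-1 : ℤ) ^ numLT A a • c (A.erase a)

def coneHomotopy (v : α) (c : Finset α → M) (A : Finset α) : M :=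
  if v ∈ A then 0 else (-1 : ℤ) ^ numLT A v • c (insert v A)

lemma coneHomotopy_of_mem {v : α} {A : Finset α} (hv : v ∈ A) (c : Finset α → M) :
    coneHomotopy v c A = 0 :=
  if_pos hv

lemma neg_one_pow_add_self_smul (k : ℕ) (x : M) : (-1 : ℤ) ^ (k + k) • x = x := by
  rw [← two_mul, pow_mul, neg_one_sq, one_pow, one_smul]

lemma coneHomotopy_zero (v : α) : coneHomotopy v (0 : Finset α → M) = 0 := by
  funext A
  simp [coneHomotopy]

theorem finsetCechD_coneHomotopy_add_coneHomotopy_finsetCechD (v : α) (c : Finset α → M)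
    (A : Finset α) :
    finsetCechD (coneHomotopy v c) A + coneHomotopy v (finsetCechD c) A = c A := by
  by_cases hv : v ∈ A
  · rw [coneHomotopy_of_mem hv, add_zero, finsetCechD,
      sum_eq_single_of_mem v hv fun a ha hav => by
        rw [coneHomotopy_of_mem (mem_erase.2 ⟨hav.symm, hv⟩), smul_zero],
      coneHomotopy, if_neg (notMem_erase v A), insert_erase hv, smul_smul, ← pow_add,
      numLT_erase hv v, if_neg (lt_irrefl v), add_zero, neg_one_pow_add_self_smul]
  · have hface : ∀ a ∈ A, (-1 : ℤ) ^ numLT A a • coneHomotopy v c (A.erase a) +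
        (-1 : ℤ) ^ numLT A v •
          ((-1 : ℤ) ^ numLT (insert v A) a • c ((insert v A).erase a)) = 0 := by
      intro a ha
      have hva : v ≠ a := fun h => hv (h ▸ ha)
      rw [coneHomotopy, if_neg fun h => hv (mem_of_mem_erase h), ← erase_insert_of_ne hva,
        smul_smul, smul_smul, ← pow_add, ← pow_add, ← add_smul, numLT_insert hv,
        numLT_erase ha v]
      -- the two exponents differ by exactly one of `[v < a]`, `[a < v]`
      convert zero_smul ℤ (c ((insert v A).erase a)) using 2
      rcases hva.lt_or_gt with h | h
      · simp only [if_pos h, if_neg h.not_gt]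
        ring
      · simp only [if_neg h.not_gt, if_pos h]
        ring
    rw [coneHomotopy, if_neg hv, finsetCechD, finsetCechD, sum_insert hv, erase_insert hv,
      numLT_insert hv v, if_neg (lt_irrefl v), add_zero, smul_add, smul_smul, ← pow_add,
      neg_one_pow_add_self_smul, smul_sum, add_left_comm, ← sum_add_distrib,
      sum_eq_zero hface, add_zero]

lemma orderEmbOfFin_image {k : ℕ} (t : Fin k ↪o α) (h : #(univ.image t) = k) :
    (univ.image t).orderEmbOfFin h = t :=
  (orderEmbOfFin_unique' h fun x => mem_image_of_mem t (mem_univ x)).symm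

lemma numLT_image_apply {k : ℕ} (t : Fin k ↪o α) (j : Fin k) :
    numLT (univ.image t) (t j) = j := by
  rw [numLT, filter_image, card_image_of_injective _ t.injective]
  simp only [t.lt_iff_lt]
  rw [filter_gt_eq_Iio, Fin.card_Iio]

lemma image_erase_apply {k : ℕ} (t : Fin (k + 1) ↪o α) (j : Fin (k + 1)) :
    (univ.image t).erase (t j) = univ.image ((Fin.succAboveOrderEmb j).trans t) := by
  rw [← image_erase t.injective, ← compl_singleton, ← Fin.image_succAbove_univ, image_image]
  rfl

end FinsetCech

variable {n : ℕ} {R : Type} [CommRing R] {q p : ℕ}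

lemma sec_eq_supported (T : Set (Fin (n + 1))) (d : ℤ) :
    sec n R T d = supported R R {e | (∑ i, e i) = d ∧ ∀ i ∉ T, 0 ≤ e i} := by
  rw [supported_eq_span_single, sec]
  congr 1
  ext x
  simp [eq_comm, and_assoc]

lemma coeff_eq_zero_of_mem_sec {T : Set (Fin (n + 1))} {d : ℤ} {x : Laurent n R}
    (hx : x ∈ sec n R T d) {e : Fin (n + 1) → ℤ}
    (he : ¬((∑ i, e i) = d ∧ ∀ i ∉ T, 0 ≤ e i)) :
    x.coeff e = 0 := by
  rw [sec_eq_supported, mem_supported'] at hx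
  exact hx e he

lemma coeff_eq_zero_of_neg_of_mem_sec {T : Set (Fin (n + 1))} {d : ℤ} {x : Laurent n R}
    (hx : x ∈ sec n R T d) {e : Fin (n + 1) → ℤ} {i : Fin (n + 1)} (hi : i ∉ T)
    (he : e i < 0) :
    x.coeff e = 0 :=
  coeff_eq_zero_of_mem_sec hx fun h => (h.2 i hi).not_gt he

def monomialProj (e : Fin (n + 1) → ℤ) : Laurent n R →ₗ[R] Laurent n R where
  toFun x := single e (x.coeff e)
  map_add' x y := by simp [single_add]
  map_smul' r x := by simp [smul_single]

lemma monomialProj_apply (e : Fin (n + 1) → ℤ) (x : Laurent n R) :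
    monomialProj e x = single e (x.coeff e) := rfl

lemma monomialProj_mem_sec {T : Set (Fin (n + 1))} {d : ℤ} {x : Laurent n R}
    (hx : x ∈ sec n R T d) (e : Fin (n + 1) → ℤ) : monomialProj e x ∈ sec n R T d := by
  rw [sec_eq_supported, mem_supported'] at hx ⊢
  intro e' he'
  rw [monomialProj_apply, coeff_single, Finsupp.single_apply]
  split_ifs with h
  · exact h ▸ hx e' he'
  · rfl

lemma monomialProj_mem_sec_of_nonneg {T T' : Set (Fin (n + 1))} {d : ℤ} {x : Laurent n R}
    (hx : x ∈ sec n R T d) {e : Fin (n + 1) → ℤ} (he : ∀ i ∈ T \ T', 0 ≤ e i) :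
    monomialProj e x ∈ sec n R T' d := by
  by_cases hxe : x.coeff e = 0
  · simp [monomialProj_apply, hxe]
  obtain ⟨hsum, hT⟩ := not_not.1 (mt (coeff_eq_zero_of_mem_sec hx) hxe)
  rw [monomialProj_apply, ← mul_one (x.coeff e), ← smul_eq_mul, ← smul_single]
  refine Submodule.smul_mem _ _ (Submodule.subset_span ⟨e, hsum, fun i hi => ?_, rfl⟩)
  by_cases hiT : i ∈ T
  · exact he i ⟨hiT, hi⟩
  · exact hT i hiT

lemma coeff_X_mul (i : Fin (n + 1)) (y : Laurent n R) (e : Fin (n + 1) → ℤ) :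
    (X n R i * y).coeff e = y.coeff (e - Pi.single i 1) := by
  rw [X, coeff_single_mul_apply, one_mul, neg_add_eq_sub]

lemma X_mul_monomialProj (i : Fin (n + 1)) (y : Laurent n R) (e : Fin (n + 1) → ℤ) :
    X n R i * monomialProj (e - Pi.single i 1) y = monomialProj e (X n R i * y) := by
  rw [monomialProj_apply, monomialProj_apply, coeff_X_mul, X, single_mul_single, one_mul,
    add_sub_cancel]

lemma coeff_eq_zero_of_forall_mem_sec_singleton {x : Laurent n R}
    (hx : ∀ a, x ∈ sec n R {a} 0) {e : Fin (n + 1) → ℤ} (he : e ≠ 0) : x.coeff e = 0 := by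
  by_cases hsum : (∑ i, e i) = 0
  · obtain ⟨i, hi⟩ : ∃ i, e i < 0 := by
      by_contra! h
      exact he (funext fun i => (sum_eq_zero_iff_of_nonneg fun i _ => h i).1 hsum i (mem_univ i))
    obtain ⟨j, hj⟩ : ∃ j, 0 < e j := by
      by_contra! h
      exact hi.ne ((sum_eq_zero_iff_of_nonpos fun i _ => h i).1 hsum i (mem_univ i))
    exact coeff_eq_zero_of_neg_of_mem_sec (hx j) (fun h : i = j => by subst h; omega) hi
  · exact coeff_eq_zero_of_mem_sec (hx 0) fun h => hsum h.1

/-- The multidegree of `e_{s 0} ∧ ⋯ ∧ e_{s (q-1)}`, where `e_i` has the degree of `x_i`. -/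
def tupleDeg (s : Fin q → Fin (n + 1)) : Fin (n + 1) → ℤ := ∑ j, Pi.single (s j) 1

lemma tupleDeg_comp_perm (s : Fin q → Fin (n + 1)) (σ : Equiv.Perm (Fin q)) :
    tupleDeg (s ∘ σ) = tupleDeg s :=
  Equiv.sum_comp σ fun j => Pi.single (s j) 1

lemma tupleDeg_cons {m : ℕ} (i : Fin (n + 1)) (s : Fin m → Fin (n + 1)) :
    tupleDeg (Fin.cons i s : Fin (m + 1) → Fin (n + 1)) = Pi.single i 1 + tupleDeg s := by
  simp [tupleDeg, Fin.sum_univ_succ]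

lemma sum_tupleDeg (s : Fin q → Fin (n + 1)) : ∑ i, tupleDeg s i = q := by
  simp [tupleDeg, Finset.sum_apply, Finset.sum_comm (γ := Fin (n + 1))]

lemma tupleDeg_apply_le_one {s : Fin q → Fin (n + 1)} (hs : Function.Injective s)
    (i : Fin (n + 1)) : tupleDeg s i ≤ 1 := by
  simp only [tupleDeg, Finset.sum_apply, Pi.single_apply]
  rw [sum_boole]
  refine Int.ofNat_le.2 (card_le_one.2 fun a ha b hb => hs ?_)
  rw [← (mem_filter.1 ha).2, ← (mem_filter.1 hb).2]

lemma exists_forall_tupleDeg_le {w : Fin (n + 1) → ℤ} (hw : (∑ i, w i) = q) :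
    ∃ v, ∀ s : Fin q → Fin (n + 1), Function.Injective s → tupleDeg s v ≤ w v := by
  obtain ⟨v, -, hv⟩ := exists_max_image univ w univ_nonempty
  have hsum : (q : ℤ) ≤ (n + 1) * w v := by
    simpa [← hw] using sum_le_sum fun i (_ : i ∈ univ) => hv i (mem_univ i)
  refine ⟨v, fun s hs => ?_⟩
  rcases Nat.eq_zero_or_pos q with rfl | hq
  · simp only [tupleDeg, univ_eq_empty, sum_empty, Pi.zero_apply]
    nlinarith
  · have : 0 < w v := by nlinarith
    linarith [tupleDeg_apply_le_one hs v]

section OmegaSec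

variable {T : Set (Fin (n + 1))} {ω : (Fin q → Fin (n + 1)) → Laurent n R}

lemma apply_mem_sec_of_mem_omegaSec (hω : ω ∈ omegaSec n R q T) (s : Fin q → Fin (n + 1)) :
    ω s ∈ sec n R T 0 :=
  hω.1 s

lemma apply_eq_zero_of_mem_omegaSec (hω : ω ∈ omegaSec n R q T) {s : Fin q → Fin (n + 1)}
    (hs : ¬Function.Injective s) : ω s = 0 :=
  hω.2.2.1 s hs

lemma sum_X_mul_cons_of_mem_omegaSec {m : ℕ} {ω : (Fin (m + 1) → Fin (n + 1)) → Laurent n R}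
    (hω : ω ∈ omegaSec n R (m + 1) T) (s : Fin m → Fin (n + 1)) :
    ∑ i, X n R i * ω (Fin.cons i s) = 0 :=
  hω.2.2.2 m rfl s

/-- The multidegree-`w` component, `x^e e_s` having multidegree `e + tupleDeg s`. -/
def weightProj (w : Fin (n + 1) → ℤ) :
    ((Fin q → Fin (n + 1)) → Laurent n R) →ₗ[R] ((Fin q → Fin (n + 1)) → Laurent n R) :=
  LinearMap.pi fun s => monomialProj (w - tupleDeg s) ∘ₗ LinearMap.proj s

lemma weightProj_apply (w : Fin (n + 1) → ℤ) (ω : (Fin q → Fin (n + 1)) → Laurent n R)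
    (s : Fin q → Fin (n + 1)) : weightProj w ω s = monomialProj (w - tupleDeg s) (ω s) :=
  rfl

lemma weightProj_mem_omegaSec (w : Fin (n + 1) → ℤ) (hω : ω ∈ omegaSec n R q T) :
    weightProj w ω ∈ omegaSec n R q T := by
  obtain ⟨hsec, hperm, hinj, heuler⟩ := hω
  refine ⟨fun s => monomialProj_mem_sec (hsec s) _, fun s σ => ?_, fun s hs => ?_, ?_⟩
  · rw [weightProj_apply, weightProj_apply, tupleDeg_comp_perm, hperm, map_zsmul]
  · rw [weightProj_apply, hinj s hs, map_zero]
  · rintro m rfl s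
    calc ∑ i, X n R i * weightProj w ω (Fin.cons i s)
        = ∑ i, monomialProj (w - tupleDeg s) (X n R i * ω (Fin.cons i s)) := by
          refine sum_congr rfl fun i _ => ?_
          rw [weightProj_apply, tupleDeg_cons, ← sub_sub, sub_right_comm, X_mul_monomialProj]
      _ = 0 := by
          rw [← map_sum, show ∑ i, X n R i * ω (Fin.cons i s) = 0 from heuler m rfl s,
            map_zero]

lemma weightProj_mem_omegaSec_of_subset_insert {w : Fin (n + 1) → ℤ} {v : Fin (n + 1)}
    (hv : ∀ s : Fin q → Fin (n + 1), Function.Injective s → tupleDeg s v ≤ w v)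
    {T' : Set (Fin (n + 1))} (hT : T ⊆ insert v T') (hω : ω ∈ omegaSec n R q T) :
    weightProj w ω ∈ omegaSec n R q T' := by
  refine ⟨fun s => ?_, (weightProj_mem_omegaSec w hω).2⟩
  by_cases hs : Function.Injective s
  · refine monomialProj_mem_sec_of_nonneg (apply_mem_sec_of_mem_omegaSec hω s) fun i hi => ?_
    obtain rfl : i = v := (hT hi.1).resolve_right hi.2
    simpa using hv s hs
  · rw [weightProj_apply, apply_eq_zero_of_mem_omegaSec hω hs, map_zero]
    exact zero_mem _

end OmegaSec

lemma coe_cechDOmega_apply (ω : CochainOmega n R q p) (t : Fin (p + 2) ↪o Fin (n + 1)) :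
    (cechDOmega n R q p ω t : (Fin q → Fin (n + 1)) → Laurent n R) =
      ∑ j : Fin (p + 2), (-1 : ℤ) ^ (j : ℕ) •
        (ω ((Fin.succAboveOrderEmb j).trans t) : (Fin q → Fin (n + 1)) → Laurent n R) := by
  simp only [cechDOmega, LinearMap.coe_mk, AddHom.coe_mk, Submodule.coe_sum]
  rfl

def cochainWeightProj (w : Fin (n + 1) → ℤ) :
    CochainOmega n R q p →ₗ[R] CochainOmega n R q p :=
  LinearMap.pi fun t =>
    ((weightProj w).restrict fun _ hx => weightProj_mem_omegaSec w hx) ∘ₗ LinearMap.proj t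

lemma coe_cochainWeightProj_apply (w : Fin (n + 1) → ℤ) (ω : CochainOmega n R q p)
    (t : Fin (p + 1) ↪o Fin (n + 1)) :
    (cochainWeightProj w ω t : (Fin q → Fin (n + 1)) → Laurent n R) = weightProj w (ω t) :=
  rfl

lemma cochainWeightProj_cechDOmega (w : Fin (n + 1) → ℤ) (ω : CochainOmega n R q p) :
    cochainWeightProj w (cechDOmega n R q p ω) = cechDOmega n R q p (cochainWeightProj w ω) := by
  funext t
  apply Subtype.ext
  simp only [coe_cochainWeightProj_apply, coe_cechDOmega_apply, map_sum, map_zsmul]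

lemma cochainWeightProj_eq_zero_of_sum_ne {w : Fin (n + 1) → ℤ} (hw : (∑ i, w i) ≠ q)
    (ω : CochainOmega n R q p) : cochainWeightProj w ω = 0 := by
  funext t
  apply Subtype.ext
  funext s
  rw [coe_cochainWeightProj_apply, weightProj_apply, monomialProj_apply,
    coeff_eq_zero_of_mem_sec (apply_mem_sec_of_mem_omegaSec (ω t).2 s) fun h => hw ?_,
    single_zero]
  · rfl
  · simpa [sum_sub_distrib, sum_tupleDeg, sub_eq_zero] using h.1

lemma sum_monomialProj_sub {x : Laurent n R} {δ : Fin (n + 1) → ℤ}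
    {S : Finset (Fin (n + 1) → ℤ)}
    (hS : ∀ e ∈ x.coeff.support, e + δ ∈ S) : ∑ w ∈ S, monomialProj (w - δ) x = x := by
  have hsub : x.coeff.support ⊆ S.map (Equiv.subRight δ).toEmbedding := fun e he =>
    mem_map_equiv.2 (by simpa using hS e he)
  calc ∑ w ∈ S, monomialProj (w - δ) x
      = ∑ e ∈ S.map (Equiv.subRight δ).toEmbedding, monomialProj e x :=
        (sum_map S (Equiv.subRight δ).toEmbedding fun e => monomialProj e x).symm
    _ = x.coeff.sum single := (Finsupp.sum_of_support_subset _ hsub _ fun _ _ => single_zero _).symm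
    _ = x := sum_coeff_single x

lemma exists_eq_sum_cochainWeightProj (ω : CochainOmega n R q p) :
    ∃ S : Finset (Fin (n + 1) → ℤ), ω = ∑ w ∈ S, cochainWeightProj w ω := by
  classical
  refine ⟨univ.biUnion fun t => univ.biUnion fun s =>
    ((ω t : (Fin q → Fin (n + 1)) → Laurent n R) s).coeff.support.image (· + tupleDeg s),
    ?_⟩
  funext t
  apply Subtype.ext
  funext s
  simp only [Finset.sum_apply, Submodule.coe_sum, coe_cochainWeightProj_apply, weightProj_apply]
  refine (sum_monomialProj_sub fun e he => ?_).symm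
  exact mem_biUnion.2 ⟨t, mem_univ _, mem_biUnion.2 ⟨s, mem_univ _, mem_image_of_mem _ he⟩⟩

def toFinsetFun (ω : CochainOmega n R q p) :
    Finset (Fin (n + 1)) → (Fin q → Fin (n + 1)) → Laurent n R :=
  fun A => if h : #A = p + 1 then ω (A.orderEmbOfFin h) else 0

lemma toFinsetFun_image (ω : CochainOmega n R q p) (t : Fin (p + 1) ↪o Fin (n + 1)) :
    toFinsetFun ω (univ.image t) = ω t := by
  have h : #(univ.image t) = p + 1 := by simp [card_image_of_injective _ t.injective]
  rw [toFinsetFun, dif_pos h, orderEmbOfFin_image]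

lemma toFinsetFun_zero : toFinsetFun (0 : CochainOmega n R q p) = 0 := by
  funext A
  unfold toFinsetFun
  split_ifs <;> rfl

lemma toFinsetFun_of_card_ne (ω : CochainOmega n R q p) {A : Finset (Fin (n + 1))}
    (h : #A ≠ p + 1) : toFinsetFun ω A = 0 :=
  dif_neg h

lemma toFinsetFun_mem_omegaSec (ω : CochainOmega n R q p) (A : Finset (Fin (n + 1))) :
    toFinsetFun ω A ∈ omegaSec n R q A := by
  unfold toFinsetFun
  split_ifs with h
  · simpa [range_orderEmbOfFin] using (ω (A.orderEmbOfFin h)).2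
  · exact zero_mem _

lemma toFinsetFun_injective :
    Function.Injective (toFinsetFun (n := n) (R := R) (q := q) (p := p)) :=
  fun ω ω' h => funext fun t => Subtype.ext (by rw [← toFinsetFun_image, h, toFinsetFun_image])

lemma toFinsetFun_cochainWeightProj (w : Fin (n + 1) → ℤ) (ω : CochainOmega n R q p)
    (A : Finset (Fin (n + 1))) :
    toFinsetFun (cochainWeightProj w ω) A = weightProj w (toFinsetFun ω A) := by
  unfold toFinsetFun
  split_ifs
  · rfl
  · rw [map_zero]

lemma toFinsetFun_cechDOmega (ω : CochainOmega n R q p) :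
    toFinsetFun (cechDOmega n R q p ω) = finsetCechD (toFinsetFun ω) := by
  funext A
  by_cases hA : #A = p + 2
  · obtain ⟨t, rfl⟩ : ∃ t : Fin (p + 2) ↪o Fin (n + 1), univ.image t = A :=
      ⟨A.orderEmbOfFin hA, image_orderEmbOfFin_univ A hA⟩
    rw [toFinsetFun_image, coe_cechDOmega_apply, finsetCechD,
      sum_image fun i _ j _ h => t.injective h]
    refine sum_congr rfl fun j _ => ?_
    rw [numLT_image_apply, image_erase_apply, toFinsetFun_image]
  · rw [toFinsetFun_of_card_ne _ hA, finsetCechD, eq_comm]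
    refine sum_eq_zero fun a ha => ?_
    rw [toFinsetFun_of_card_ne _ (by rw [card_erase_of_mem ha]; omega), smul_zero]

def ofFinsetFun (c : Finset (Fin (n + 1)) → (Fin q → Fin (n + 1)) → Laurent n R)
    (hc : ∀ A : Finset (Fin (n + 1)), c A ∈ omegaSec n R q A) : CochainOmega n R q p :=
  fun t => ⟨c (univ.image t), by simpa using hc (univ.image t)⟩

lemma toFinsetFun_ofFinsetFun {c : Finset (Fin (n + 1)) → (Fin q → Fin (n + 1)) → Laurent n R}
    (hc : ∀ A : Finset (Fin (n + 1)), c A ∈ omegaSec n R q A)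
    (hp : ∀ A, #A ≠ p + 1 → c A = 0) :
    toFinsetFun (ofFinsetFun (p := p) c hc) = c := by
  funext A
  by_cases hA : #A = p + 1
  · rw [toFinsetFun, dif_pos hA]
    exact congrArg c (image_orderEmbOfFin_univ A hA)
  · rw [toFinsetFun_of_card_ne _ hA, hp A hA]

theorem cochainWeightProj_mem_range_of_cechDOmega_eq_zero {w : Fin (n + 1) → ℤ}
    {v : Fin (n + 1)}
    (hv : ∀ s : Fin q → Fin (n + 1), Function.Injective s → tupleDeg s v ≤ w v)
    {ω : CochainOmega n R q (p + 1)} (hω : cechDOmega n R q (p + 1) ω = 0) :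
    cochainWeightProj w ω ∈ LinearMap.range (cechDOmega n R q p) := by
  set c := toFinsetFun (cochainWeightProj w ω) with hc_def
  have hc : finsetCechD c = 0 := by
    rw [hc_def, ← toFinsetFun_cechDOmega, ← cochainWeightProj_cechDOmega, hω, map_zero,
      toFinsetFun_zero]
  have hmem : ∀ A : Finset (Fin (n + 1)), coneHomotopy v c A ∈ omegaSec n R q A := by
    intro A
    unfold coneHomotopy
    split_ifs
    · exact zero_mem _
    · refine zsmul_mem ?_ _
      rw [hc_def, toFinsetFun_cochainWeightProj]
      exact weightProj_mem_omegaSec_of_subset_insert hv (by simp)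
        (toFinsetFun_mem_omegaSec ω _)
  have hcard : ∀ A : Finset (Fin (n + 1)), #A ≠ p + 1 → coneHomotopy v c A = 0 := by
    intro A hA
    unfold coneHomotopy
    split_ifs with hvA
    · rfl
    · rw [hc_def, toFinsetFun_of_card_ne _ (by rw [card_insert_of_notMem hvA]; omega), smul_zero]
  refine ⟨ofFinsetFun _ hmem, toFinsetFun_injective ?_⟩
  rw [toFinsetFun_cechDOmega, toFinsetFun_ofFinsetFun hmem hcard]
  funext A
  simpa [hc, coneHomotopy_zero] using finsetCechD_coneHomotopy_add_coneHomotopy_finsetCechD v c A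

theorem ker_cechDOmega_le_range (q p : ℕ) :
    LinearMap.ker (cechDOmega n R q (p + 1)) ≤ LinearMap.range (cechDOmega n R q p) := by
  intro ω hω
  obtain ⟨S, hS⟩ := exists_eq_sum_cochainWeightProj ω
  rw [hS]
  refine sum_mem fun w _ => ?_
  by_cases hw : (∑ i, w i) = q
  · obtain ⟨v, hv⟩ := exists_forall_tupleDeg_le hw
    exact cochainWeightProj_mem_range_of_cechDOmega_eq_zero hv hω
  · rw [cochainWeightProj_eq_zero_of_sum_ne hw]
    exact zero_mem _

lemma eq_zero_of_forall_mem_omegaSec_singleton {m : ℕ}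
    {x : (Fin (m + 1) → Fin (n + 1)) → Laurent n R}
    (hx : ∀ a, x ∈ omegaSec n R (m + 1) {a}) : x = 0 := by
  have hconst : ∀ s e, e ≠ 0 → (x s).coeff e = 0 := fun s e he =>
    coeff_eq_zero_of_forall_mem_sec_singleton (fun a => apply_mem_sec_of_mem_omegaSec (hx a) s) he
  funext s
  rw [← Fin.cons_self_tail s]
  ext e
  by_cases he : e = 0
  · subst he
    set j := s 0
    have heuler := congrArg (fun y : Laurent n R => y.coeff (Pi.single j 1))
      (sum_X_mul_cons_of_mem_omegaSec (hx j) (Fin.tail s))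
    simp only [coeff_sum, Finsupp.finsetSum_apply, coeff_X_mul, coeff_zero,
      Finsupp.coe_zero, Pi.zero_apply] at heuler
    rwa [sum_eq_single j (fun i _ hij => hconst _ _ ?_) (by simp), sub_self] at heuler
    rw [sub_ne_zero]
    exact fun h => hij (by simpa [Pi.single_apply] using congrFun h i)
  · exact hconst _ _ he

lemma toFinsetFun_singleton_eq_of_cechDOmega_eq_zero {ω : CochainOmega n R q 0}
    (hω : cechDOmega n R q 0 ω = 0) (a b : Fin (n + 1)) :
    toFinsetFun ω {a} = toFinsetFun ω {b} := by
  -- For a cocycle `c`, the cone identity at `{a}` with apex `b` reads `c {b} = c {a}`.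
  have h := finsetCechD_coneHomotopy_add_coneHomotopy_finsetCechD b (toFinsetFun ω) {a}
  rw [← toFinsetFun_cechDOmega, hω, toFinsetFun_zero, coneHomotopy_zero] at h
  rcases eq_or_ne a b with rfl | hab
  · rfl
  · simpa [finsetCechD, coneHomotopy, numLT, filter_singleton, hab.symm] using h.symm

theorem ker_cechDOmega_zero_eq_bot (m : ℕ) :
    LinearMap.ker (cechDOmega n R (m + 1) 0) = ⊥ := by
  refine eq_bot_iff.2 fun ω hω => (Submodule.mem_bot R).2 (funext fun t => Subtype.ext ?_)
  have hglobal : ∀ a b, toFinsetFun ω {a} = toFinsetFun ω {b} :=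
    toFinsetFun_singleton_eq_of_cechDOmega_eq_zero hω
  rw [← toFinsetFun_image, show univ.image t = {t 0} by ext; simp [Fin.fin_one_eq_zero]]
  exact eq_zero_of_forall_mem_omegaSec_singleton fun b => by
    simpa [hglobal _ b] using toFinsetFun_mem_omegaSec ω {b}

lemma subsingleton_cohomologyOmega_of_ker_le
    (h : LinearMap.ker (cechDOmega n R q p) ≤ coboundaryOmega n R q p) :
    Subsingleton (cohomologyOmega n R q p) :=
  Submodule.subsingleton_iff_eq_bot.2
    (eq_bot_iff.2 ((Submodule.map_mono h).trans (Submodule.mkQ_map_self _).le))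

end CechProj
end

open CechProj in
theorem bott_vanishing_for_cayley_trick_general
    (k : Type) [Field k] (n q : ℕ) (hq1 : 1 ≤ q) :
    (∀ p : ℕ, Subsingleton (cohomologyOmega n k q p)) ∧
    (∀ p : ℕ, 1 ≤ p → Subsingleton (cohomologyOmega n k 0 p)) := by
  refine ⟨fun p => subsingleton_cohomologyOmega_of_ker_le ?_,
    fun p hp => subsingleton_cohomologyOmega_of_ker_le ?_⟩
  · rcases p with _ | p
    · obtain ⟨m, rfl⟩ := Nat.exists_eq_add_of_le' hq1
      exact (ker_cechDOmega_zero_eq_bot m).le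
    · exact ker_cechDOmega_le_range q p
  · obtain ⟨p, rfl⟩ := Nat.exists_eq_add_of_le' hp
    exact ker_cechDOmega_le_range 0 p

open CechProj in
theorem bott_vanishing_for_cayley_trick
    (k : Type) [Field k] (n q : ℕ) (hn : 1 ≤ n) (hq1 : 1 ≤ q) (hq2 : q ≤ n) :
    (∀ p : ℕ, Subsingleton (cohomologyOmega n k q p)) ∧
    (∀ p : ℕ, 1 ≤ p → Subsingleton (cohomologyOmega n k 0 p)) :=
  bott_vanishing_for_cayley_trick_general k n q hq1
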